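/- In dimension N > 2, a rank-2 tensor T satisfies T_{ac} T_b{}^c = f·g_{ab} with f ≠ 0 if and only if f > 0 and T^c{}_a T^c{}_b g_{cc'}-contracted on the first indices also equals f·g_{ab}; equivalently, T/√f is a Lorentz transformation. In particular, every non-singular null-cone preserving map is proportional to a Lorentz transformation. -/

import Mathlib

noncomputable section

/-- Minkowski signature factors: (+1, -1, ..., -1). -/
def eta {n : ℕ} (i : Fin (n + 1)) : ℝ := if i = 0 then 1 else -1

/-- The Minkowski (Lorentzian) inner product of signature (+,-,...,-). -/
def mink {n : ℕ} (u v : Fin (n + 1) → ℝ) : ℝ := ∑ i, eta i * u i * v i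

/-- A causal future-pointing vector. -/
def CausalFuture {n : ℕ} (u : Fin (n + 1) → ℝ) : Prop :=
  0 ≤ mink u u ∧ u ≠ 0 ∧ 0 < u 0

/-- A null future-pointing vector. -/
def NullFuture {n : ℕ} (u : Fin (n + 1) → ℝ) : Prop :=
  mink u u = 0 ∧ u ≠ 0 ∧ 0 < u 0

/-- A timelike future-pointing vector. -/
def TimelikeFuture {n : ℕ} (u : Fin (n + 1) → ℝ) : Prop :=
  0 < mink u u ∧ 0 < u 0

/-- The Lorentzian metric as a matrix (covariant components). -/
def gMat {n : ℕ} : Matrix (Fin (n + 1)) (Fin (n + 1)) ℝ := Matrix.diagonal eta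

/-- Contraction of a rank-2 covariant tensor with two vectors. -/
def quad {n : ℕ} (T : Matrix (Fin (n + 1)) (Fin (n + 1)) ℝ) (u v : Fin (n + 1) → ℝ) : ℝ :=
  ∑ a, ∑ b, u a * T a b * v b

/-- The dominant property for rank-2 tensors. -/
def DP2 {n : ℕ} (T : Matrix (Fin (n + 1)) (Fin (n + 1)) ℝ) : Prop :=
  ∀ u v, CausalFuture u → CausalFuture v → 0 ≤ quad T u v

/-- (T ₂×₂ T)_{ab} = T_{ac} T_b{}^c : contraction on the second index of each factor. -/
def sq2 {n : ℕ} (T : Matrix (Fin (n + 1)) (Fin (n + 1)) ℝ) :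
    Matrix (Fin (n + 1)) (Fin (n + 1)) ℝ :=
  Matrix.of fun a b => ∑ c, eta c * T a c * T b c

/-- (T ₁×₁ T)_{ab} = T_{ca} T^c{}_b : contraction on the first index of each factor. -/
def sq1 {n : ℕ} (T : Matrix (Fin (n + 1)) (Fin (n + 1)) ℝ) :
    Matrix (Fin (n + 1)) (Fin (n + 1)) ℝ :=
  Matrix.of fun a b => ∑ c, eta c * T c a * T c b

/-- The linear map v^a ↦ v^a T_a{}^b defined by a rank-2 tensor T. -/
def tmap {n : ℕ} (T : Matrix (Fin (n + 1)) (Fin (n + 1)) ℝ) (v : Fin (n + 1) → ℝ) :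
    Fin (n + 1) → ℝ := fun b => eta b * ∑ a, v a * T a b

/-- (A×B)_{ab} := A_{ca} B^c{}_b. -/
def xprod {n : ℕ} (A B : Matrix (Fin (n + 1)) (Fin (n + 1)) ℝ) :
    Matrix (Fin (n + 1)) (Fin (n + 1)) ℝ :=
  Matrix.of fun a b => ∑ c, eta c * A c a * B c b

/-- The dominant property for rank-r covariant tensors. -/
def DP {n r : ℕ} (T : MultilinearMap ℝ (fun _ : Fin r => (Fin (n + 1) → ℝ)) ℝ) : Prop :=
  ∀ u : Fin r → (Fin (n + 1) → ℝ), (∀ i, CausalFuture (u i)) → 0 ≤ T u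

/-!
Writing `sq2 T = T g Tᵀ`, the condition `T g Tᵀ = f g` with `f ≠ 0` makes `f⁻¹ g Tᵀ g` a right,
hence two-sided, inverse of `T`, which turns it into `Tᵀ g T = f g`. The rows of `T` are then
`g`-orthogonal with `g(T a, T a) = f η_a`; if `f < 0`, two spatial rows would be a timelike vector
and a timelike vector orthogonal to it, which is impossible. So `f > 0`, and `T / √f` preserves `g`.
-/

open Matrix

lemma eta_zero {n : ℕ} : eta (0 : Fin (n + 1)) = 1 := if_pos rfl

lemma eta_succ {n : ℕ} (i : Fin n) : eta i.succ = -1 := if_neg i.succ_ne_zero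

lemma eta_mul_self {n : ℕ} (i : Fin (n + 1)) : eta i * eta i = 1 := by
  unfold eta; split <;> norm_num

lemma gMat_mul_self {n : ℕ} : (gMat : Matrix (Fin (n + 1)) (Fin (n + 1)) ℝ) * gMat = 1 := by
  rw [gMat, diagonal_mul_diagonal, funext eta_mul_self, diagonal_one]

lemma gMat_transpose {n : ℕ} : (gMat : Matrix (Fin (n + 1)) (Fin (n + 1)) ℝ)ᵀ = gMat :=
  diagonal_transpose _

lemma mink_eq_sub_sum {n : ℕ} (u v : Fin (n + 1) → ℝ) :
    mink u v = u 0 * v 0 - ∑ i : Fin n, u i.succ * v i.succ := by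
  simp only [mink, Fin.sum_univ_succ, eta_zero, eta_succ, neg_mul, one_mul,
    Finset.sum_neg_distrib]
  ring

lemma mink_eq_dotProduct_mulVec {n : ℕ} (u v : Fin (n + 1) → ℝ) :
    mink u v = u ⬝ᵥ (gMat *ᵥ v) := by
  simp only [mink, gMat, mulVec_diagonal, dotProduct]
  exact Finset.sum_congr rfl fun i _ => by ring

lemma mink_self_nonpos_of_mink_eq_zero {n : ℕ} {u v : Fin (n + 1) → ℝ}
    (hu : 0 < mink u u) (huv : mink u v = 0) : mink v v ≤ 0 := by
  rw [mink_eq_sub_sum] at hu huv ⊢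
  have hCS := Finset.sum_mul_sq_le_sq_mul_sq Finset.univ (fun i : Fin n => u i.succ)
    (fun i : Fin n => v i.succ)
  simp only [← sq] at hu huv ⊢
  set P := ∑ i : Fin n, u i.succ ^ 2
  set Q := ∑ i : Fin n, v i.succ ^ 2
  have hP : 0 ≤ P := Finset.sum_nonneg fun i _ => sq_nonneg _
  have hQ : 0 ≤ Q := Finset.sum_nonneg fun i _ => sq_nonneg _
  rw [show ∑ i : Fin n, u i.succ * v i.succ = u 0 * v 0 by linarith] at hCS
  by_contra! hv
  -- `Q < v₀²` and `P < u₀²` would give `P Q < u₀² v₀²`, against Cauchy–Schwarz.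
  nlinarith [mul_lt_mul_of_pos_left hv (by linarith : 0 < u 0 ^ 2), mul_nonneg hQ hu.le]

lemma Matrix.transpose_mul_mul_eq_smul_of_mul_mul_transpose_eq_smul {m K : Type*} [Fintype m]
    [DecidableEq m] [Field K] {G T : Matrix m m K} {f : K} (hG : G * G = 1) (hf : f ≠ 0)
    (h : T * G * Tᵀ = f • G) : Tᵀ * G * T = f • G := by
  have hright : T * (f⁻¹ • (G * Tᵀ * G)) = 1 := by
    rw [Matrix.mul_smul, ← Matrix.mul_assoc, ← Matrix.mul_assoc, h, Matrix.smul_mul, hG,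
      smul_smul, inv_mul_cancel₀ hf, one_smul]
  have hleft : G * Tᵀ * G * T = f • 1 := by
    rw [← one_smul K (G * Tᵀ * G * T), ← mul_inv_cancel₀ hf, ← smul_smul, ← Matrix.smul_mul,
      mul_eq_one_comm.mp hright]
  calc Tᵀ * G * T = G * (G * Tᵀ * G * T) := by simp only [← Matrix.mul_assoc, hG, Matrix.one_mul]
    _ = f • G := by rw [hleft, Matrix.mul_smul, Matrix.mul_one]

lemma sq2_eq_mul_mul_transpose {n : ℕ} (T : Matrix (Fin (n + 1)) (Fin (n + 1)) ℝ) :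
    sq2 T = T * gMat * Tᵀ := by
  ext a b
  rw [mul_apply]
  simp only [sq2, gMat, of_apply, mul_diagonal, transpose_apply]
  exact Finset.sum_congr rfl fun c _ => by ring

lemma sq1_eq_sq2_transpose {n : ℕ} (T : Matrix (Fin (n + 1)) (Fin (n + 1)) ℝ) :
    sq1 T = sq2 Tᵀ := rfl

lemma sq2_smul {n : ℕ} (c : ℝ) (T : Matrix (Fin (n + 1)) (Fin (n + 1)) ℝ) :
    sq2 (c • T) = c ^ 2 • sq2 T := by
  rw [sq2_eq_mul_mul_transpose, sq2_eq_mul_mul_transpose, transpose_smul, Matrix.smul_mul,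
    Matrix.smul_mul, Matrix.mul_smul, smul_smul, sq]

lemma sq2_transpose_eq_of_sq2_eq {n : ℕ} {T : Matrix (Fin (n + 1)) (Fin (n + 1)) ℝ} {f : ℝ}
    (hf : f ≠ 0) (h : sq2 T = f • gMat) : sq2 Tᵀ = f • gMat := by
  rw [sq2_eq_mul_mul_transpose, transpose_transpose]
  rw [sq2_eq_mul_mul_transpose] at h
  exact transpose_mul_mul_eq_smul_of_mul_mul_transpose_eq_smul gMat_mul_self hf h

lemma pos_of_sq2_eq_smul_gMat {n : ℕ} {T : Matrix (Fin (n + 3)) (Fin (n + 3)) ℝ} {f : ℝ}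
    (hf : f ≠ 0) (h : sq2 T = f • gMat) : 0 < f := by
  have hrows (a b) : mink (T a) (T b) = f * gMat a b := congrFun (congrFun h a) b
  set i : Fin (n + 3) := Fin.succ 0
  set j : Fin (n + 3) := Fin.succ 1
  have hii : mink (T i) (T i) = -f := by rw [hrows, gMat, diagonal_apply_eq, eta_succ]; ring
  have hjj : mink (T j) (T j) = -f := by rw [hrows, gMat, diagonal_apply_eq, eta_succ]; ring
  have hij : mink (T i) (T j) = 0 := by
    rw [hrows, gMat, diagonal_apply_ne _ ((Fin.succ_injective _).ne zero_ne_one), mul_zero]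
  by_contra! hnonpos
  have hneg : f < 0 := lt_of_le_of_ne hnonpos hf
  have := mink_self_nonpos_of_mink_eq_zero (by linarith) hij
  linarith

lemma tmap_eq_mulVec {n : ℕ} (S : Matrix (Fin (n + 1)) (Fin (n + 1)) ℝ)
    (v : Fin (n + 1) → ℝ) : tmap S v = gMat *ᵥ (Sᵀ *ᵥ v) := by
  ext b
  simp only [tmap, gMat, mulVec_diagonal]
  simp only [mulVec, dotProduct, transpose_apply, mul_comm]

lemma mink_tmap_tmap {n : ℕ} (S : Matrix (Fin (n + 1)) (Fin (n + 1)) ℝ)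
    (u v : Fin (n + 1) → ℝ) : mink (tmap S u) (tmap S v) = u ⬝ᵥ (sq2 S *ᵥ v) := by
  rw [mink_eq_dotProduct_mulVec, tmap_eq_mulVec, tmap_eq_mulVec,
    mulVec_mulVec (M := gMat) (N := gMat), gMat_mul_self, one_mulVec, mulVec_mulVec,
    ← vecMul_transpose, ← dotProduct_mulVec, transpose_mul, transpose_transpose, gMat_transpose,
    mulVec_mulVec, sq2_eq_mul_mul_transpose]

/-- in dimension > 2, T_{ac}T_b{}^c = f·g with f ≠ 0 iff f > 0 and the
first-index contraction T_{ca}T^c{}_b also equals f·g; equivalently T/√f is a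
Lorentz transformation. -/
theorem stmt13 {n : ℕ} (T : Matrix (Fin (n + 3)) (Fin (n + 3)) ℝ) (f : ℝ) :
    ((sq2 T = f • gMat ∧ f ≠ 0) ↔ (0 < f ∧ sq1 T = f • gMat)) ∧
    (sq2 T = f • gMat → f ≠ 0 →
      ∀ u v : Fin (n + 3) → ℝ,
        mink (tmap ((Real.sqrt f)⁻¹ • T) u) (tmap ((Real.sqrt f)⁻¹ • T) v)
          = mink u v) := by
  simp only [sq1_eq_sq2_transpose]
  refine ⟨⟨fun ⟨h, hf⟩ => ⟨pos_of_sq2_eq_smul_gMat hf h, sq2_transpose_eq_of_sq2_eq hf h⟩,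
    fun ⟨hpos, h⟩ => ⟨?_, hpos.ne'⟩⟩, fun h hf u v => ?_⟩
  · rw [← transpose_transpose T]
    exact sq2_transpose_eq_of_sq2_eq hpos.ne' h
  · have hpos := pos_of_sq2_eq_smul_gMat hf h
    have hLorentz : sq2 ((Real.sqrt f)⁻¹ • T) = gMat := by
      rw [sq2_smul, h, smul_smul, inv_pow, Real.sq_sqrt hpos.le, inv_mul_cancel₀ hf, one_smul]
    rw [mink_tmap_tmap, hLorentz, mink_eq_dotProduct_mulVec]
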